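/- arXiv:1712.06073 — 5 statements merged into one kernel-verified Lean document; each statement's English description precedes it below -/
import Mathlib

section
/- Let 𝒰₁ be an ultrafilter on S₁ and 𝒰₂ an ultrafilter on S₂. Then the tensor product 𝒰₁ ⊗ 𝒰₂ equals the filter ℱ(𝒰₁ × 𝒰₂) generated by products A₁ × A₂ with A₁ ∈ 𝒰₁, A₂ ∈ 𝒰₂, if and only if for every A ∈ 𝒰₁ and every family {B_i : i ∈ A} of sets in 𝒰₂, there exists C ∈ 𝒰₁ such that ⋂_{c ∈ C ∩ A} B_c ∈ 𝒰₂. -/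
/-- The tensor product `𝒰₁ ⊗ 𝒰₂` equals the filter generated by rectangles
`A₁ × A₂` (`A₁ ∈ 𝒰₁`, `A₂ ∈ 𝒰₂`) iff for every `A ∈ 𝒰₁` and family
`{B i : i ∈ A} ⊆ 𝒰₂` there is `C ∈ 𝒰₁` with `⋂ c ∈ C ∩ A, B c ∈ 𝒰₂`. -/
theorem stmt_1 {S₁ S₂ : Type*} (𝒰₁ : Ultrafilter S₁) (𝒰₂ : Ultrafilter S₂) :
    (∀ A : Set (S₁ × S₂),
        {s₁ : S₁ | {s₂ : S₂ | (s₁, s₂) ∈ A} ∈ 𝒰₂} ∈ 𝒰₁ ↔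
          ∃ A₁ ∈ 𝒰₁, ∃ A₂ ∈ 𝒰₂, A₁ ×ˢ A₂ ⊆ A) ↔
      (∀ A ∈ 𝒰₁, ∀ B : S₁ → Set S₂, (∀ i ∈ A, B i ∈ 𝒰₂) →
        ∃ C ∈ 𝒰₁, (⋂ c ∈ C ∩ A, B c) ∈ 𝒰₂) := by
  constructor
  · intro h A hA B hB
    obtain ⟨A₁, hA₁, A₂, hA₂, hsub⟩ :=
      (h {p : S₁ × S₂ | p.1 ∈ A → p.2 ∈ B p.1}).mp
        (Filter.mem_of_superset (f := 𝒰₁.toFilter) hA (fun s₁ hs₁ => by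
          simp only [Set.mem_setOf_eq]
          exact Filter.mem_of_superset (f := 𝒰₂.toFilter) (hB s₁ hs₁) (fun s₂ hs₂ _ => hs₂)))
    refine ⟨A₁, hA₁, Filter.mem_of_superset (f := 𝒰₂.toFilter) hA₂ ?_⟩
    intro s₂ hs₂
    simp only [Set.mem_iInter]
    rintro c ⟨hcC, hcA⟩
    exact hsub (Set.mk_mem_prod hcC hs₂) hcA
  · intro h A
    constructor
    · intro hA
      obtain ⟨C, hC, hI⟩ := h _ hA (fun s₁ => {s₂ | (s₁, s₂) ∈ A})
        (fun i hi => hi)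
      refine ⟨C ∩ {s₁ : S₁ | {s₂ : S₂ | (s₁, s₂) ∈ A} ∈ 𝒰₂},
        Filter.inter_mem hC hA, _, hI, ?_⟩
      rintro ⟨s₁, s₂⟩ ⟨hs₁, hs₂⟩
      exact Set.mem_iInter₂.mp hs₂ s₁ hs₁
    · rintro ⟨A₁, hA₁, A₂, hA₂, hsub⟩
      refine Filter.mem_of_superset (f := 𝒰₁.toFilter) hA₁ (fun s₁ hs₁ => ?_)
      exact Filter.mem_of_superset (f := 𝒰₂.toFilter) hA₂ (fun s₂ hs₂ => hsub ⟨hs₁, hs₂⟩)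
end

section
/- For ultrafilters 𝒰₁ and 𝒰₂ on ℕ, the tensor product 𝒰₁ ⊗ 𝒰₂ equals the product filter ℱ(𝒰₁ × 𝒰₂) if and only if at least one of 𝒰₁, 𝒰₂ is a principal ultrafilter. -/
/-!
If `𝒰₁ = pure a`, both conditions on `A` say that the fibre `{m | (a, m) ∈ A}` lies in `𝒰₂`, and
symmetrically if `𝒰₂` is principal. If neither is principal, both lie above the cofinite filter
`atTop` on `ℕ`; then `{(n, m) | n < m}` belongs to `𝒰₁ ⊗ 𝒰₂`, because every fibre is cofinite,
but contains no rectangle `A₁ ×ˢ A₂`, because `A₁` contains elements above any `m ∈ A₂`.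
-/

open Filter

theorem Ultrafilter.le_atTop_of_forall_ne_pure {𝒰 : Ultrafilter ℕ} (h : ∀ n, 𝒰 ≠ pure n) :
    (𝒰 : Filter ℕ) ≤ atTop := by
  obtain hle | ⟨n, hn⟩ := 𝒰.le_cofinite_or_eq_pure
  · exact hle.trans_eq Nat.cofinite_eq_atTop
  · exact absurd hn (h n)

namespace Filter

variable {α β : Type*}

theorem mem_pure_prod_iff {a : α} {g : Filter β} {s : Set (α × β)} :
    s ∈ pure a ×ˢ g ↔ {b | (a, b) ∈ s} ∈ g := by
  rw [pure_prod, mem_map]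
  rfl

theorem mem_prod_pure_iff {f : Filter α} {b : β} {s : Set (α × β)} :
    s ∈ f ×ˢ pure b ↔ {a | (a, b) ∈ s} ∈ f := by
  rw [prod_pure, mem_map]
  rfl

theorem setOf_lt_notMem_prod_of_le_atTop [Preorder α] {f g : Filter α} [f.NeBot] [g.NeBot]
    (hf : f ≤ atTop) : {p : α × α | p.1 < p.2} ∉ f ×ˢ g := by
  intro hmem
  obtain ⟨A₁, hA₁, A₂, hA₂, hsub⟩ := mem_prod_iff.1 hmem
  obtain ⟨m, hm⟩ := nonempty_of_mem hA₂
  obtain ⟨n, hn, hmn⟩ := nonempty_of_mem (inter_mem hA₁ (hf (Ici_mem_atTop m)))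
  exact (hsub (Set.mk_mem_prod hn hm)).not_ge hmn

end Filter

open Ultrafilter in
/-- For ultrafilters on `ℕ`, the tensor product equals the product filter iff
at least one of the ultrafilters is principal. -/
theorem stmt_3 (𝒰₁ 𝒰₂ : Ultrafilter ℕ) :
    (∀ A : Set (ℕ × ℕ),
        {n : ℕ | {m : ℕ | (n, m) ∈ A} ∈ 𝒰₂} ∈ 𝒰₁ ↔
          ∃ A₁ ∈ 𝒰₁, ∃ A₂ ∈ 𝒰₂, A₁ ×ˢ A₂ ⊆ A) ↔
      ((∃ n : ℕ, 𝒰₁ = pure n) ∨ (∃ n : ℕ, 𝒰₂ = pure n)) := by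
  simp_rw [← mem_coe (f := 𝒰₁), ← mem_coe (f := 𝒰₂), ← mem_prod_iff]
  constructor
  · intro h
    by_contra! hc
    have h₂ : (𝒰₂ : Filter ℕ) ≤ atTop := le_atTop_of_forall_ne_pure hc.2
    refine setOf_lt_notMem_prod_of_le_atTop (le_atTop_of_forall_ne_pure hc.1) ((h _).1 ?_)
    simp [h₂ (eventually_gt_atTop _)]
  · rintro (⟨a, rfl⟩ | ⟨b, rfl⟩) A
    · rw [coe_pure, mem_pure_prod_iff]
      rfl
    · rw [coe_pure, mem_prod_pure_iff]
      rfl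
end

section
/- Let 𝒰₂ be an ultrafilter on S₂ and let κ = |S₁|. Then the following are equivalent: (1) for every ultrafilter 𝒰₁ on S₁, the tensor product 𝒰₁ ⊗ 𝒰₂ equals the product filter ℱ(𝒰₁ × 𝒰₂); (2) 𝒰₂ is κ⁺-complete, i.e., every intersection of at most κ many sets from 𝒰₂ is in 𝒰₂. -/
universe u v

/-- `𝒰₁ ⊗ 𝒰₂ = ℱ(𝒰₁ × 𝒰₂)` holds for every ultrafilter `𝒰₁` on `S₁` iff `𝒰₂`
is `κ⁺`-complete, where `κ = |S₁|`. -/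
theorem stmt_4 {S₁ : Type u} {S₂ : Type v} (𝒰₂ : Ultrafilter S₂) :
    (∀ 𝒰₁ : Ultrafilter S₁, ∀ A : Set (S₁ × S₂),
        {s₁ : S₁ | {s₂ : S₂ | (s₁, s₂) ∈ A} ∈ 𝒰₂} ∈ 𝒰₁ ↔
          ∃ A₁ ∈ 𝒰₁, ∃ A₂ ∈ 𝒰₂, A₁ ×ˢ A₂ ⊆ A) ↔
      (∀ (ι : Type u) (B : ι → Set S₂), Cardinal.mk ι ≤ Cardinal.mk S₁ →
        (∀ i, B i ∈ 𝒰₂) → (⋂ i, B i) ∈ 𝒰₂) := by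
  constructor
  · intro h ι B hcard hB
    by_contra hnot
    obtain ⟨f⟩ := Cardinal.le_def _ _ |>.mp hcard
    by_cases hι : Nonempty ι
    · obtain ⟨i₀⟩ := hι
      classical
      set g : S₂ → S₁ := fun s₂ => if hs : ∃ i, s₂ ∉ B i then f hs.choose else f i₀ with hg
      have hfiber : ∀ s₁ : S₁, {s₂ | g s₂ = s₁} ∉ 𝒰₂ := by
        intro s₁ hmem
        by_cases hr : ∃ j, f j = s₁
        · obtain ⟨j, hj⟩ := hr
          have hsub : {s₂ | g s₂ = s₁} ⊆ (B j)ᶜ ∪ (⋂ i, B i) := by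
            intro s₂ hs₂
            simp only [Set.mem_setOf_eq, hg] at hs₂
            by_cases hs : ∃ i, s₂ ∉ B i
            · rw [dif_pos hs] at hs₂
              have : hs.choose = j := f.injective (hs₂.trans hj.symm)
              left
              exact this ▸ hs.choose_spec
            · right
              push_neg at hs
              exact Set.mem_iInter.mpr hs
          have : (B j)ᶜ ∪ (⋂ i, B i) ∈ 𝒰₂ := (𝒰₂ : Filter S₂).mem_of_superset hmem hsub
          rcases (Ultrafilter.union_mem_iff).mp this with h1 | h2
          · exact (Ultrafilter.compl_mem_iff_notMem.mp h1) (hB j)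
          · exact hnot h2
        · push_neg at hr
          have hempty : {s₂ | g s₂ = s₁} = ∅ := by
            ext s₂
            simp only [Set.mem_setOf_eq, Set.mem_empty_iff_false, iff_false, hg]
            by_cases hs : ∃ i, s₂ ∉ B i
            · rw [dif_pos hs]; exact hr _
            · rw [dif_neg hs]; exact hr _
          rw [hempty] at hmem
          exact (Filter.empty_notMem (𝒰₂ : Filter S₂)) hmem
      set 𝒰₁ : Ultrafilter S₁ := Ultrafilter.map g 𝒰₂ with h𝒰₁
      set A : Set (S₁ × S₂) := {p | g p.2 ≠ p.1} with hA
      have hrow : {s₁ : S₁ | {s₂ : S₂ | (s₁, s₂) ∈ A} ∈ 𝒰₂} ∈ 𝒰₁ := by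
        have : {s₁ : S₁ | {s₂ : S₂ | (s₁, s₂) ∈ A} ∈ 𝒰₂} = Set.univ := by
          ext s₁
          simp only [Set.mem_setOf_eq, Set.mem_univ, iff_true]
          have : {s₂ : S₂ | (s₁, s₂) ∈ A} = {s₂ | g s₂ = s₁}ᶜ := by
            ext s₂; simp [hA, eq_comm]
          rw [this]
          exact Ultrafilter.compl_mem_iff_notMem.mpr (hfiber s₁)
        rw [this]
        exact Filter.univ_mem
      obtain ⟨A₁, hA₁, A₂, hA₂, hsub⟩ := (h 𝒰₁ A).mp hrow
      have hpre : g ⁻¹' A₁ ∈ 𝒰₂ := hA₁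
      obtain ⟨s₂, hs₂pre, hs₂A₂⟩ := Filter.nonempty_of_mem
        ((𝒰₂ : Filter S₂).inter_mem hpre hA₂)
      have : (g s₂, s₂) ∈ A := hsub ⟨hs₂pre, hs₂A₂⟩
      exact this rfl
    · haveI := not_nonempty_iff.mp hι
      have : (⋂ i, B i) = Set.univ := Set.iInter_of_empty B
      rw [this] at hnot
      exact hnot Filter.univ_mem
  · intro hcomp 𝒰₁ A
    constructor
    · intro hT
      classical
      set T : Set S₁ := {s₁ : S₁ | {s₂ : S₂ | (s₁, s₂) ∈ A} ∈ 𝒰₂} with hTdef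
      set B : S₁ → Set S₂ := fun s₁ => if s₁ ∈ T then {s₂ | (s₁, s₂) ∈ A} else Set.univ with hBdef
      have hB : ∀ s₁, B s₁ ∈ 𝒰₂ := by
        intro s₁
        by_cases hs : s₁ ∈ T
        · simp only [hBdef]; rw [if_pos hs]; exact hs
        · simp only [hBdef]; rw [if_neg hs]; exact Filter.univ_mem
      have hA₂ : (⋂ s₁, B s₁) ∈ 𝒰₂ := hcomp S₁ B le_rfl hB
      refine ⟨T, hT, ⋂ s₁, B s₁, hA₂, ?_⟩
      rintro ⟨s₁, s₂⟩ ⟨h1, h2⟩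
      have := Set.mem_iInter.mp h2 s₁
      simpa [hBdef, h1] using this
    · rintro ⟨A₁, hA₁, A₂, hA₂, hsub⟩
      refine (𝒰₁ : Filter S₁).mem_of_superset hA₁ ?_
      intro s₁ hs₁
      exact (𝒰₂ : Filter S₂).mem_of_superset hA₂ (fun s₂ hs₂ => hsub ⟨hs₁, hs₂⟩)
end

section
/- Let 𝒰 be a Schur ultrafilter on ℕ (with addition), i.e., every A ∈ 𝒰 contains x, y, z with x + y = z. Then for every n ≥ 2 and every A ∈ 𝒰 there exist a₁, …, a_n ∈ A such that all the initial sums a₁ + a₂, a₁ + a₂ + a₃, …, a₁ + ⋯ + a_n also lie in A. -/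
theorem schur_key (𝒰 : Ultrafilter ℕ)
    (hSchur : ∀ A ∈ 𝒰, ∃ x ∈ A, ∃ y ∈ A, ∃ z ∈ A, x + y = z) :
    ∀ k : ℕ, ∀ A ∈ 𝒰,
      {z : ℕ | ∃ a : ℕ → ℕ, (∀ i, 1 ≤ i → i ≤ k + 1 → a i ∈ A) ∧
        (∀ i, 2 ≤ i → i ≤ k + 1 → (∑ j ∈ Finset.Icc 1 i, a j) ∈ A) ∧
        (∑ j ∈ Finset.Icc 1 (k + 1), a j) = z} ∈ 𝒰 := by
  intro k
  induction k with
  | zero =>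
    intro A hA
    refine 𝒰.toFilter.mem_of_superset hA ?_
    intro z hz
    refine ⟨fun _ => z, fun i _ _ => hz, fun i h2 h1 => by omega, by simp⟩
  | succ k ih =>
    intro A hA
    by_contra hT
    have hTc : {z : ℕ | ∃ a : ℕ → ℕ, (∀ i, 1 ≤ i → i ≤ k + 1 + 1 → a i ∈ A) ∧
        (∀ i, 2 ≤ i → i ≤ k + 1 + 1 → (∑ j ∈ Finset.Icc 1 i, a j) ∈ A) ∧
        (∑ j ∈ Finset.Icc 1 (k + 1 + 1), a j) = z}ᶜ ∈ 𝒰 :=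
      Ultrafilter.compl_mem_iff_notMem.mpr hT
    set B : Set ℕ := A ∩ {z : ℕ | ∃ a : ℕ → ℕ, (∀ i, 1 ≤ i → i ≤ k + 1 + 1 → a i ∈ A) ∧
        (∀ i, 2 ≤ i → i ≤ k + 1 + 1 → (∑ j ∈ Finset.Icc 1 i, a j) ∈ A) ∧
        (∑ j ∈ Finset.Icc 1 (k + 1 + 1), a j) = z}ᶜ with hB
    have hBA : B ⊆ A := Set.inter_subset_left
    have hBmem : B ∈ 𝒰 := Filter.inter_mem hA hTc
    have hS := ih B hBmem
    -- the set of totals over B is in 𝒰; it is a subset of B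
    set S : Set ℕ := {z : ℕ | ∃ a : ℕ → ℕ, (∀ i, 1 ≤ i → i ≤ k + 1 → a i ∈ B) ∧
        (∀ i, 2 ≤ i → i ≤ k + 1 → (∑ j ∈ Finset.Icc 1 i, a j) ∈ B) ∧
        (∑ j ∈ Finset.Icc 1 (k + 1), a j) = z} with hSdef
    have hSB : S ⊆ B := by
      rintro w ⟨a, ha1, ha2, ha3⟩
      rcases Nat.eq_zero_or_pos k with hk | hk
      · subst hk
        have : (∑ j ∈ Finset.Icc 1 1, a j) = a 1 := by simp
        rw [this] at ha3
        exact ha3 ▸ ha1 1 le_rfl le_rfl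
      · exact ha3 ▸ ha2 (k + 1) (by omega) le_rfl
    obtain ⟨x, hx, y, hy, z, hz, hxyz⟩ := hSchur S hS
    obtain ⟨a, ha1, ha2, ha3⟩ := hx
    have hyB : y ∈ B := hSB hy
    have hzB : z ∈ B := hSB hz
    -- build the extended sequence
    set a' : ℕ → ℕ := fun i => if i = k + 2 then y else a i with ha'
    have hsum_eq : ∀ i, i ≤ k + 1 →
        (∑ j ∈ Finset.Icc 1 i, a' j) = ∑ j ∈ Finset.Icc 1 i, a j := by
      intro i hi
      refine Finset.sum_congr rfl fun j hj => ?_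
      have hj' := Finset.mem_Icc.mp hj
      simp only [ha']
      rw [if_neg (by omega)]
    have hlast : (∑ j ∈ Finset.Icc 1 (k + 2), a' j) = x + y := by
      rw [Finset.sum_Icc_succ_top (by omega : 1 ≤ k + 2)]
      rw [hsum_eq (k + 1) le_rfl, ha3]
      simp [ha']
    have hzT : z ∈ {z : ℕ | ∃ a : ℕ → ℕ, (∀ i, 1 ≤ i → i ≤ k + 1 + 1 → a i ∈ A) ∧
        (∀ i, 2 ≤ i → i ≤ k + 1 + 1 → (∑ j ∈ Finset.Icc 1 i, a j) ∈ A) ∧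
        (∑ j ∈ Finset.Icc 1 (k + 1 + 1), a j) = z} := by
      refine ⟨a', ?_, ?_, ?_⟩
      · intro i h1 h2
        by_cases h : i = k + 2
        · simpa [ha', h] using hBA hyB
        · have : a' i = a i := by simp only [ha']; rw [if_neg h]
          rw [this]
          exact hBA (ha1 i h1 (by omega))
      · intro i h2 h2'
        by_cases h : i = k + 2
        · subst h
          rw [hlast, hxyz]
          exact hBA hzB
        · rw [hsum_eq i (by omega)]
          exact hBA (ha2 i h2 (by omega))
      · rw [show k + 1 + 1 = k + 2 from rfl, hlast, hxyz]
    exact hzB.2 hzT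

/-- Every Schur ultrafilter on `(ℕ, +)` witnesses, in each of its members, a
sequence `a 1, …, a n` all of whose initial sums `a 1 + ⋯ + a i` (`2 ≤ i ≤ n`)
also lie in the member. -/
theorem stmt_12 (𝒰 : Ultrafilter ℕ)
    (hSchur : ∀ A ∈ 𝒰, ∃ x ∈ A, ∃ y ∈ A, ∃ z ∈ A, x + y = z) :
    ∀ n : ℕ, 2 ≤ n → ∀ A ∈ 𝒰, ∃ a : ℕ → ℕ,
      (∀ i, 1 ≤ i → i ≤ n → a i ∈ A) ∧
      (∀ i, 2 ≤ i → i ≤ n → (∑ j ∈ Finset.Icc 1 i, a j) ∈ A) := by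
  intro n hn A hA
  have h := schur_key 𝒰 hSchur (n - 1) A hA
  have hn1 : n - 1 + 1 = n := by omega
  rw [hn1] at h
  obtain ⟨z, a, ha1, ha2, -⟩ := Filter.nonempty_of_mem h
  exact ⟨a, ha1, ha2⟩
end

section
/- Let 𝒰 be a selective ultrafilter on ℕ (nonprincipal, and every function ℕ → ℕ is constant or injective on some set of 𝒰). Then for every function g : ℕ → ℕ there exists A ∈ 𝒰 such that for all a, b ∈ A with a < b, g(a) < b. -/
/-!
Cut `ℕ` into consecutive blocks `[h k, h (k + 1))`, each so long that `g` maps it below the end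
of the following block. The block index has finite fibres, so by selectivity and nonprincipality
it is injective on a member of `𝒰`; shrinking that member to the blocks of one parity, any two of
its elements `a < b` lie in blocks at least two apart, which forces `g a < b`.
-/

open Finset

section BlockIndex

variable {h : ℕ → ℕ}

/-- For strictly monotone `h` with `h 0 = 0`, the `k` with `h k ≤ n < h (k + 1)`. -/
def blockIndex (h : ℕ → ℕ) (n : ℕ) : ℕ :=
  Nat.findGreatest (fun k => h k ≤ n) n

lemma apply_blockIndex_le (h0 : h 0 = 0) (n : ℕ) : h (blockIndex h n) ≤ n :=
  Nat.findGreatest_spec (P := fun k => h k ≤ n) (Nat.zero_le n) (by simp [h0])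

lemma lt_apply_blockIndex_succ (hh : StrictMono h) (n : ℕ) : n < h (blockIndex h n + 1) := by
  by_contra! hn
  have : blockIndex h n + 1 ≤ blockIndex h n := Nat.le_findGreatest (hh.le_apply.trans hn) hn
  omega

lemma blockIndex_mono (hh : StrictMono h) (h0 : h 0 = 0) : Monotone (blockIndex h) :=
  fun a b hab =>
    have hb : h (blockIndex h a) ≤ b := (apply_blockIndex_le h0 a).trans hab
    Nat.le_findGreatest (hh.le_apply.trans hb) hb

lemma finite_preimage_blockIndex (hh : StrictMono h) (k : ℕ) : (blockIndex h ⁻¹' {k}).Finite :=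
  (Set.finite_Iio (h (k + 1))).subset fun n hn => by
    rw [Set.mem_preimage, Set.mem_singleton_iff] at hn
    simpa [hn] using lt_apply_blockIndex_succ hh n

lemma lt_of_blockIndex_add_two_le {g : ℕ → ℕ} (hh : StrictMono h) (h0 : h 0 = 0)
    (hg : ∀ k, ∀ a < h k, g a < h (k + 1)) {a b : ℕ}
    (hab : blockIndex h a + 2 ≤ blockIndex h b) : g a < b :=
  calc g a < h (blockIndex h a + 2) := hg _ a (lt_apply_blockIndex_succ hh a)
    _ ≤ h (blockIndex h b) := hh.monotone hab
    _ ≤ b := apply_blockIndex_le h0 b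

end BlockIndex

section RapidSeq

def rapidSeq (g : ℕ → ℕ) : ℕ → ℕ
  | 0 => 0
  | k + 1 => rapidSeq g k + (range (rapidSeq g k)).sup g + 1

variable (g : ℕ → ℕ)

lemma rapidSeq_strictMono : StrictMono (rapidSeq g) :=
  strictMono_nat_of_lt_succ fun k => by simp only [rapidSeq]; omega

lemma lt_rapidSeq_succ {a k : ℕ} (ha : a < rapidSeq g k) : g a < rapidSeq g (k + 1) := by
  have : g a ≤ (range (rapidSeq g k)).sup g := le_sup (mem_range.2 ha)
  simp only [rapidSeq]
  omega

end RapidSeq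

namespace Ultrafilter

variable {α β : Type*} (𝒰 : Ultrafilter α)

lemma not_forall_apply_eq_of_finite_preimage (hnp : ∀ x, 𝒰 ≠ pure x) {f : α → β}
    (hf : ∀ y, (f ⁻¹' {y}).Finite) {A : Set α} (hA : A ∈ 𝒰) :
    ¬ ∀ a ∈ A, ∀ b ∈ A, f a = f b := by
  intro hconst
  obtain ⟨a₀, ha₀⟩ := 𝒰.nonempty_of_mem hA
  have hfin : A.Finite := (hf (f a₀)).subset fun a ha => hconst a ha a₀ ha₀
  obtain ⟨x, -, hx⟩ := 𝒰.eq_pure_of_finite_mem hfin hA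
  exact hnp x hx

lemma exists_mem_forall_iff (p : α → Prop) : ∃ A ∈ 𝒰, ∀ a ∈ A, ∀ b ∈ A, p a ↔ p b := by
  rcases 𝒰.em p with h | h
  · exact ⟨_, h, fun a ha b hb => iff_of_true ha hb⟩
  · exact ⟨_, h, fun a ha b hb => iff_of_false ha hb⟩

end Ultrafilter

lemma add_two_le_of_injOn_of_even_iff {α : Type*} [Preorder α] {f : α → ℕ} (hf : Monotone f)
    {A : Set α} (hinj : Set.InjOn f A) (hpar : ∀ a ∈ A, ∀ b ∈ A, Even (f a) ↔ Even (f b))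
    {a b : α} (ha : a ∈ A) (hb : b ∈ A) (hab : a < b) : f a + 2 ≤ f b := by
  have hne : f a ≠ f b := fun h => hab.ne (hinj ha hb h)
  have hle : f a ≤ f b := hf hab.le
  have := hpar a ha b hb
  rw [Nat.even_iff, Nat.even_iff] at this
  omega

/-- A nonprincipal selective ultrafilter on `ℕ` has the rapid-growth property:
for every `g : ℕ → ℕ` there is a member `A` such that `g a < b` whenever
`a < b` are in `A`. -/
theorem stmt_16 (𝒰 : Ultrafilter ℕ)
    (hnp : ∀ x : ℕ, 𝒰 ≠ pure x)
    (hsel : ∀ f : ℕ → ℕ, ∃ A ∈ 𝒰,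
      (∀ a ∈ A, ∀ b ∈ A, f a = f b) ∨ Set.InjOn f A) :
    ∀ g : ℕ → ℕ, ∃ A ∈ 𝒰, ∀ a ∈ A, ∀ b ∈ A, a < b → g a < b := by
  intro g
  have hh := rapidSeq_strictMono g
  obtain ⟨A, hA, hconst | hinj⟩ := hsel (blockIndex (rapidSeq g))
  · exact absurd hconst
      (𝒰.not_forall_apply_eq_of_finite_preimage hnp (finite_preimage_blockIndex hh) hA)
  obtain ⟨B, hB, hpar⟩ := 𝒰.exists_mem_forall_iff fun n => Even (blockIndex (rapidSeq g) n)
  refine ⟨A ∩ B, Filter.inter_mem hA hB, fun a ha b hb hab => ?_⟩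
  refine lt_of_blockIndex_add_two_le hh rfl (fun k a => lt_rapidSeq_succ g) ?_
  exact add_two_le_of_injOn_of_even_iff (blockIndex_mono hh rfl) (hinj.mono Set.inter_subset_left)
    (fun a ha b hb => hpar a ha.2 b hb.2) ha hb hab
end
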